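/- Abel's multinomial theorem, second special instance: for positive reals x₁,...,xₘ and nonnegative integer n, ∑_{s ⊨ n} binom(n; s₁,...,sₘ) (x₁+s₁)^(s₁−1)···(x_{m−1}+s_{m−1})^(s_{m−1}−1)·(xₘ+sₘ)^(sₘ) = (x₁···xₘ)^(−1)·xₘ·(x₁+...+xₘ+n)^n. -/

import Mathlib

open Finset

lemma fd_pow_zero (d : ℕ) : ∀ N, d < N → (fwdDiff (1:ℝ))^[N] (fun t : ℝ => t ^ d) = 0 := by
  induction d using Nat.strong_induction_on with
  | _ d ih =>
    intro N hN
    obtain ⟨M, rfl⟩ : ∃ M, N = M + 1 := ⟨N - 1, by omega⟩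
    rw [Function.iterate_succ_apply]
    have h1 : fwdDiff (1:ℝ) (fun t : ℝ => t ^ d)
        = ∑ j ∈ Finset.range d, (d.choose j : ℝ) • (fun t : ℝ => t ^ j) := by
      funext t
      simp only [fwdDiff, Finset.sum_apply, Pi.smul_apply, smul_eq_mul]
      rw [add_pow, Finset.sum_range_succ]
      simp [mul_comm]
    rw [h1, fwdDiff_iter_finset_sum]
    funext y
    rw [Pi.zero_apply, Finset.sum_apply]
    refine Finset.sum_eq_zero fun j hj => ?_
    have hj' : j < d := Finset.mem_range.mp hj
    rw [fwdDiff_iter_const_smul, ih j hj' M (by omega), Pi.smul_apply, Pi.zero_apply, smul_zero]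

lemma findiff (N d : ℕ) (hd : d < N) (x : ℝ) :
    ∑ k ∈ Finset.range (N + 1), (-1 : ℝ) ^ (N - k) * (N.choose k) * (x + k) ^ d = 0 := by
  have h := fwdDiff_iter_eq_sum_shift (1:ℝ) (fun t : ℝ => t ^ d) N x
  rw [fd_pow_zero d N hd, Pi.zero_apply] at h
  rw [eq_comm] at h
  rw [← h]
  refine Finset.sum_congr rfl fun k _ => ?_
  rw [zsmul_eq_mul, nsmul_eq_mul]
  push_cast
  ring

lemma abel2 (x : ℝ) (hx : 0 < x) : ∀ (n : ℕ) (y : ℝ),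
    ∑ k ∈ Finset.range (n + 1),
        (n.choose k : ℝ) * (x + k) ^ ((k : ℤ) - 1) * (y + ((n - k : ℕ) : ℝ)) ^ (n - k)
      = x⁻¹ * (x + y + n) ^ n := by
  intro n
  induction n with
  | zero =>
    intro y
    simp [zpow_neg, zpow_one]
  | succ n ih =>
    intro y
    set f : ℝ → ℝ := fun z => ∑ k ∈ Finset.range (n + 2),
        ((n+1).choose k : ℝ) * (x + k) ^ ((k : ℤ) - 1) * (z + ((n + 1 - k : ℕ) : ℝ)) ^ (n + 1 - k)
      with hf_def
    set g : ℝ → ℝ := fun z => x⁻¹ * (x + z + (n + 1 : ℕ)) ^ (n + 1) with hg_def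
    have key : ∀ z : ℝ, HasDerivAt (fun z => f z - g z) 0 z := by
      intro z
      have hf : HasDerivAt f (∑ k ∈ Finset.range (n + 2),
          ((n+1).choose k : ℝ) * (x + k) ^ ((k : ℤ) - 1) *
            (((n + 1 - k : ℕ) : ℝ) * (z + ((n + 1 - k : ℕ) : ℝ)) ^ (n + 1 - k - 1))) z := by
        apply HasDerivAt.fun_sum
        intro k _
        have h1 : HasDerivAt (fun z : ℝ => (z + ((n + 1 - k : ℕ) : ℝ)) ^ (n + 1 - k))
            (((n + 1 - k : ℕ) : ℝ) * (z + ((n + 1 - k : ℕ) : ℝ)) ^ (n + 1 - k - 1) * 1) z :=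
          ((hasDerivAt_id z).add_const _).pow _
        rw [mul_one] at h1
        exact h1.const_mul _
      have hg : HasDerivAt g (x⁻¹ * (((n+1 : ℕ) : ℝ) * (x + z + ((n+1 : ℕ) : ℝ)) ^ n)) z := by
        have h1 : HasDerivAt (fun z : ℝ => (x + z + ((n+1:ℕ) : ℝ)) ^ (n + 1))
            (((n+1:ℕ) : ℝ) * (x + z + ((n+1:ℕ):ℝ)) ^ (n + 1 - 1) * 1) z :=
          (((hasDerivAt_id z).const_add x).add_const _).pow _
        rw [mul_one, Nat.add_sub_cancel] at h1
        exact h1.const_mul _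
      have heq : (∑ k ∈ Finset.range (n + 2),
          ((n+1).choose k : ℝ) * (x + k) ^ ((k : ℤ) - 1) *
            (((n + 1 - k : ℕ) : ℝ) * (z + ((n + 1 - k : ℕ) : ℝ)) ^ (n + 1 - k - 1)))
          = x⁻¹ * (((n+1 : ℕ) : ℝ) * (x + z + ((n+1 : ℕ) : ℝ)) ^ n) := by
        rw [Finset.sum_range_succ]
        simp only [Nat.sub_self, Nat.cast_zero, zero_mul, mul_zero, add_zero]
        have hstep : ∀ k ∈ Finset.range (n + 1),
            ((n+1).choose k : ℝ) * (x + k) ^ ((k : ℤ) - 1) *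
              (((n + 1 - k : ℕ) : ℝ) * (z + ((n + 1 - k : ℕ) : ℝ)) ^ (n + 1 - k - 1))
            = ((n+1 : ℕ) : ℝ) *
              ((n.choose k : ℝ) * (x + k) ^ ((k : ℤ) - 1) * ((z+1) + ((n - k : ℕ) : ℝ)) ^ (n - k)) := by
          intro k hk
          have hk' : k ≤ n := Nat.lt_succ_iff.mp (Finset.mem_range.mp hk)
          have hc : ((n+1).choose k : ℝ) * ((n + 1 - k : ℕ) : ℝ)
              = (n.choose k : ℝ) * ((n+1 : ℕ) : ℝ) := by
            exact_mod_cast congrArg (fun t : ℕ => (t : ℝ)) (Nat.choose_mul_succ_eq n k).symm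
          have h2 : ((n + 1 - k : ℕ) : ℝ) = ((n - k : ℕ) : ℝ) + 1 := by
            push_cast [Nat.succ_sub hk']
            ring
          have h3 : n + 1 - k - 1 = n - k := by omega
          rw [h2] at hc
          rw [h3, h2]
          have hb : (z + (((n - k : ℕ) : ℝ) + 1)) ^ (n-k) = ((z+1) + ((n - k : ℕ):ℝ))^(n-k) := by
            ring_nf
          rw [hb]
          generalize (x + (k:ℝ)) ^ ((k:ℤ) - 1) = P
          generalize ((z+1) + ((n - k : ℕ):ℝ))^(n-k) = B
          linear_combination (P * B) * hc
        rw [Finset.sum_congr rfl hstep, ← Finset.mul_sum, ih (z + 1)]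
        push_cast
        ring
      have := (hf.sub hg)
      rw [heq, sub_self] at this
      exact this
    have hconst := is_const_of_deriv_eq_zero
      (fun z => (key z).differentiableAt) (fun z => (key z).deriv) y (-(x + (n+1 : ℕ)))
    have hg0 : g (-(x + (n+1 : ℕ))) = 0 := by
      simp only [hg_def]
      have h0 : x + -(x + ((n+1:ℕ) : ℝ)) + ((n+1:ℕ) : ℝ) = 0 := by ring
      rw [h0, zero_pow (by omega), mul_zero]
    have hf0 : f (-(x + (n+1 : ℕ))) = 0 := by
      simp only [hf_def]
      have hterm : ∀ k ∈ Finset.range (n + 2),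
          ((n+1).choose k : ℝ) * (x + k) ^ ((k : ℤ) - 1) *
            ((-(x + ((n+1:ℕ):ℝ))) + ((n + 1 - k : ℕ) : ℝ)) ^ (n + 1 - k)
          = (-1 : ℝ) ^ (n + 1 - k) * ((n+1).choose k : ℝ) * (x + k) ^ n := by
        intro k hk
        have hk' : k ≤ n + 1 := Nat.lt_succ_iff.mp (Finset.mem_range.mp hk)
        have hpos : (0:ℝ) < x + k := by positivity
        have h2 : (-(x + ((n+1:ℕ):ℝ))) + ((n + 1 - k : ℕ) : ℝ) = -(x + k) := by
          have h5 : ((n + 1 - k : ℕ) : ℝ) = ((n+1:ℕ) : ℝ) - k := by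
            push_cast [Nat.cast_sub hk']
            ring
          rw [h5]; push_cast; ring
        rw [h2, neg_pow]
        have h4 : (x + (k:ℝ)) ^ ((k : ℤ) - 1) * (x + (k:ℝ)) ^ (n + 1 - k)
            = (x + (k:ℝ)) ^ n := by
          rw [← zpow_natCast (x + (k:ℝ)) (n + 1 - k), ← zpow_add₀ (ne_of_gt hpos),
            ← zpow_natCast (x + (k:ℝ)) n]
          congr 1
          omega
        calc ((n+1).choose k : ℝ) * (x + k) ^ ((k : ℤ) - 1) *
              ((-1) ^ (n + 1 - k) * (x + k) ^ (n + 1 - k))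
            = (-1 : ℝ) ^ (n + 1 - k) * ((n+1).choose k : ℝ) *
              ((x + k) ^ ((k : ℤ) - 1) * (x + k) ^ (n + 1 - k)) := by ring
          _ = _ := by rw [h4]
      rw [Finset.sum_congr rfl hterm]
      exact findiff (n + 1) n (by omega) x
    have hfy : f y = g y := by
      have h6 : f y - g y = 0 := by rw [hconst, hf0, hg0, sub_zero]
      linarith
    calc ∑ k ∈ Finset.range (n + 1 + 1),
          ((n+1).choose k : ℝ) * (x + k) ^ ((k : ℤ) - 1) * (y + ((n + 1 - k : ℕ) : ℝ)) ^ (n + 1 - k)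
        = f y := by rw [hf_def]
      _ = g y := hfy
      _ = x⁻¹ * (x + y + (n+1 : ℕ)) ^ (n+1) := by rw [hg_def]
      _ = _ := by push_cast; ring


lemma multinomial_map {α β : Type*} (s : Finset α) (e : α ↪ β) (f : β → ℕ) :
    Nat.multinomial (s.map e) f = Nat.multinomial s (f ∘ e) := by
  simp [Nat.multinomial, Finset.sum_map, Finset.prod_map, Function.comp]


lemma multinomial_fin_cons (k : ℕ) (a : ℕ) (t : Fin k → ℕ) :
    Nat.multinomial Finset.univ (Fin.cons a t)
      = (a + ∑ i, t i).choose a * Nat.multinomial Finset.univ t := by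
  rw [Fin.univ_succ, Nat.multinomial_cons, Fin.cons_zero, multinomial_map, Finset.sum_map]
  have h1 : (Fin.cons a t ∘ (({ toFun := Fin.succ, inj' := Fin.succ_injective k } : Fin k ↪ Fin (k+1)) : Fin k → Fin (k+1))) = t := by
    funext i; simp
  rw [h1]
  congr 2

lemma sum_adt_succ {M : Type*} [AddCommMonoid M] (k n : ℕ) (f : (Fin (k + 1) → ℕ) → M) :
    ∑ s ∈ Finset.Nat.antidiagonalTuple (k + 1) n, f s
      = ∑ p ∈ Finset.HasAntidiagonal.antidiagonal n, ∑ t ∈ Finset.Nat.antidiagonalTuple k p.2,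
          f (Fin.cons p.1 t) := by
  rw [Finset.sum_sigma' (Finset.HasAntidiagonal.antidiagonal n)
    (fun p => Finset.Nat.antidiagonalTuple k p.2) (fun p t => f (Fin.cons p.1 t))]
  apply Finset.sum_nbij'
    (i := fun (s : Fin (k+1) → ℕ) =>
      (⟨(s 0, ∑ i : Fin k, Fin.tail s i), Fin.tail s⟩ : Σ _p : ℕ × ℕ, Fin k → ℕ))
    (j := fun x => Fin.cons x.1.1 x.2)
  · intro s hs
    rw [Finset.Nat.mem_antidiagonalTuple] at hs
    refine Finset.mem_sigma.mpr ⟨?_, ?_⟩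
    · rw [Finset.HasAntidiagonal.mem_antidiagonal]
      rw [← hs, Fin.sum_univ_succ]
      rfl
    · exact Finset.Nat.mem_antidiagonalTuple.mpr rfl
  · intro x hx
    rw [Finset.mem_sigma] at hx
    obtain ⟨h1, h2⟩ := hx
    rw [Finset.HasAntidiagonal.mem_antidiagonal] at h1
    rw [Finset.Nat.mem_antidiagonalTuple] at h2 ⊢
    rw [Fin.sum_cons, h2, h1]
  · intro s _
    exact Fin.cons_self_tail s
  · intro x hx
    rw [Finset.mem_sigma] at hx
    obtain ⟨_, h2⟩ := hx
    rw [Finset.Nat.mem_antidiagonalTuple] at h2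
    refine Sigma.ext ?_ (heq_of_eq ?_)
    · simp only [Fin.cons_zero, Fin.tail_cons, h2]
    · simp [Fin.tail_cons]
  · intro s _
    rw [Fin.cons_self_tail s]


/-- Abel's multinomial theorem, second special instance `p = (-1,...,-1,0)`:
`∑_{s ⊨ n} binom(n; s) (x₁+s₁)^(s₁-1) ⋯ (xₘ+sₘ)^(sₘ-1) (x_{m+1}+s_{m+1})^(s_{m+1})
  = (x₁⋯x_{m+1})⁻¹ x_{m+1} (x₁+⋯+x_{m+1}+n)^n`. -/
theorem abel_multinomial_last_zero (m n : ℕ) (x : Fin (m + 1) → ℝ) (hx : ∀ j, 0 < x j) :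
    ∑ s ∈ Finset.Nat.antidiagonalTuple (m + 1) n,
        (Nat.multinomial Finset.univ s : ℝ) *
          (∏ j : Fin m, (x j.castSucc + s j.castSucc) ^ ((s j.castSucc : ℤ) - 1)) *
          (x (Fin.last m) + s (Fin.last m)) ^ (s (Fin.last m)) =
      (∏ j, x j)⁻¹ * x (Fin.last m) * (∑ j, x j + n) ^ n := by
  induction m generalizing n with
  | zero =>
    rw [Finset.Nat.antidiagonalTuple_one, Finset.sum_singleton]
    have h0 : (Finset.univ : Finset (Fin 1)) = {0} := by
      simp [Finset.eq_singleton_iff_unique_mem]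
    rw [h0, Nat.multinomial_singleton]
    have h1 : (Fin.last 0) = 0 := rfl
    simp [h1, Fin.prod_univ_zero, Fin.prod_univ_one, Fin.sum_univ_one,
      inv_mul_cancel₀ (hx 0).ne']
  | succ m ih =>
    set x' : Fin (m + 1) → ℝ := fun i => x i.succ with hx'_def
    have hx' : ∀ j, 0 < x' j := fun j => hx j.succ
    set X : ℝ := ∑ i, x' i with hX_def
    set K : ℝ := (∏ j, x' j)⁻¹ * x' (Fin.last m) with hK_def
    rw [sum_adt_succ]
    have hinner : ∀ p ∈ Finset.HasAntidiagonal.antidiagonal n,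
        (∑ t ∈ Finset.Nat.antidiagonalTuple (m + 1) p.2,
          (Nat.multinomial Finset.univ (Fin.cons p.1 t) : ℝ) *
            (∏ j : Fin (m+1), (x j.castSucc + ((Fin.cons p.1 t : Fin (m+1+1) → ℕ) j.castSucc : ℕ)) ^
              ((((Fin.cons p.1 t : Fin (m+1+1) → ℕ) j.castSucc : ℕ) : ℤ) - 1)) *
            (x (Fin.last (m+1)) + ((Fin.cons p.1 t : Fin (m+1+1) → ℕ) (Fin.last (m+1)) : ℕ)) ^
              ((Fin.cons p.1 t : Fin (m+1+1) → ℕ) (Fin.last (m+1))))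
        = (n.choose p.1 : ℝ) * (x 0 + p.1) ^ ((p.1 : ℤ) - 1) * (X + p.2) ^ p.2 * K := by
      intro p hp
      have hp12 : p.1 + p.2 = n := Finset.HasAntidiagonal.mem_antidiagonal.mp hp
      have hstep : ∀ t ∈ Finset.Nat.antidiagonalTuple (m + 1) p.2,
          (Nat.multinomial Finset.univ (Fin.cons p.1 t) : ℝ) *
            (∏ j : Fin (m+1), (x j.castSucc + ((Fin.cons p.1 t : Fin (m+1+1) → ℕ) j.castSucc : ℕ)) ^
              ((((Fin.cons p.1 t : Fin (m+1+1) → ℕ) j.castSucc : ℕ) : ℤ) - 1)) *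
            (x (Fin.last (m+1)) + ((Fin.cons p.1 t : Fin (m+1+1) → ℕ) (Fin.last (m+1)) : ℕ)) ^
              ((Fin.cons p.1 t : Fin (m+1+1) → ℕ) (Fin.last (m+1)))
          = ((n.choose p.1 : ℝ) * (x 0 + p.1) ^ ((p.1 : ℤ) - 1)) *
            ((Nat.multinomial Finset.univ t : ℝ) *
              (∏ j : Fin m, (x' j.castSucc + t j.castSucc) ^ ((t j.castSucc : ℤ) - 1)) *
              (x' (Fin.last m) + t (Fin.last m)) ^ (t (Fin.last m))) := by
        intro t ht
        have hts : ∑ i, t i = p.2 := Finset.Nat.mem_antidiagonalTuple.mp ht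
        have hm : (Nat.multinomial Finset.univ (Fin.cons p.1 t) : ℝ)
            = (n.choose p.1 : ℝ) * (Nat.multinomial Finset.univ t : ℝ) := by
          rw [multinomial_fin_cons, hts, hp12]
          push_cast
          ring
        have hprod : (∏ j : Fin (m+1), (x j.castSucc + ((Fin.cons p.1 t : Fin (m+1+1) → ℕ) j.castSucc : ℕ)) ^
              ((((Fin.cons p.1 t : Fin (m+1+1) → ℕ) j.castSucc : ℕ) : ℤ) - 1))
            = (x 0 + p.1) ^ ((p.1 : ℤ) - 1) *
              ∏ j : Fin m, (x' j.castSucc + t j.castSucc) ^ ((t j.castSucc : ℤ) - 1) := by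
          rw [Fin.prod_univ_succ]
          congr 1
        have hlast : (Fin.cons p.1 t : Fin (m+1+1) → ℕ) (Fin.last (m+1)) = t (Fin.last m) := by
          rw [← Fin.succ_last, Fin.cons_succ]
        have hxlast : x (Fin.last (m+1)) = x' (Fin.last m) := by
          rw [hx'_def, ← Fin.succ_last]
        rw [hm, hprod, hlast, hxlast]
        ring
      rw [Finset.sum_congr rfl hstep, ← Finset.mul_sum, ih p.2 x' hx']
      rw [← hX_def, ← hK_def]
      ring
    rw [Finset.sum_congr rfl hinner, Finset.Nat.sum_antidiagonal_eq_sum_range_succ_mk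
      (fun p => (n.choose p.1 : ℝ) * (x 0 + p.1) ^ ((p.1 : ℤ) - 1) * (X + p.2) ^ p.2 * K) n]
    have : ∑ k ∈ Finset.range (n + 1),
        (n.choose k : ℝ) * (x 0 + k) ^ ((k : ℤ) - 1) * (X + ((n - k : ℕ) : ℝ)) ^ (n - k) * K
        = (x 0)⁻¹ * (x 0 + X + n) ^ n * K := by
      rw [← Finset.sum_mul, abel2 (x 0) (hx 0) n X]
    rw [this]
    have hrhs1 : (∏ j : Fin (m+2), x j) = x 0 * ∏ j : Fin (m+1), x' j := by
      rw [Fin.prod_univ_succ]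
    have hrhs2 : (∑ j : Fin (m+2), x j) = x 0 + X := by
      rw [Fin.sum_univ_succ, hX_def]
    rw [hrhs1, hrhs2, ← Fin.succ_last, hK_def]
    show (x 0)⁻¹ * (x 0 + X + n) ^ n * ((∏ j, x' j)⁻¹ * x' (Fin.last m))
      = (x 0 * ∏ j, x' j)⁻¹ * x' (Fin.last m) * (x 0 + X + n) ^ n
    rw [mul_inv]
    ring
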